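/- arXiv:1408.0282 — 2 statements merged into one kernel-verified Lean document; each statement's English description precedes it below -/
import Mathlib

section
/- Let $\gamma_i$ be the LST of the cycle time $C_i$ with mean $E[C] > 0$, and let $(C_{iP}, C_{iR})$ have joint LST $E[e^{-\omega_P C_{iP} - \omega_R C_{iR}}] = \frac{\gamma_i(\omega_P) - \gamma_i(\omega_R)}{(\omega_R - \omega_P)E[C]}$. Let $L_H(\cdot)$ and $L_k(\cdot)$ be independent Poisson processes of rates $\lambda_H \geq 0$ and $\lambda_{ik} > 0$, independent of $(C_{iP}, C_{iR})$, and let $\{B_{H,j}\}$, $\{B_{ik,j}\}$ be i.i.d. sequences with LSTs $\beta_H, \beta_{ik}$, independent of everything else. Then for $\omega > 0$ with $\omega \neq \lambda_{ik}(1-\beta_{ik}(\omega))$: $E\left[e^{-\omega\left(C_{iR} + \sum_{j=1}^{L_H(C_{iP}+C_{iR})} B_{H,j} + \sum_{j=1}^{L_k(C_{iP})} B_{ik,j}\right)}\right] = \frac{\gamma_i(\lambda_H(1-\beta_H(\omega)) + \lambda_{ik}(1-\beta_{ik}(\omega))) - \gamma_i(\omega + \lambda_H(1-\beta_H(\omega)))}{[\omega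 - \lambda_{ik}(1-\beta_{ik}(\omega))] E[C]}$. -/
/-!
Conditionally on the past and residual cycle times `(t, u)`, the counts `L_H(t + u)` and
`L_k(t)` are independent Poisson variables with means `λ_H (t + u)` and `λ_k t`, and each of the
`m` (resp. `n`) service times contributes a factor `β_H(ω)` (resp. `β_k(ω)`). Summing the Poisson
generating functions `∑ β^m e^{-a} a^m / m! = e^{-a (1 - β)}` turns the conditional LST into
`exp (-(λ_H (1 - β_H) + λ_k (1 - β_k)) t - (ω + λ_H (1 - β_H)) u)`, and the joint LST of
`(C_P, C_R)` evaluates its expectation.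

The counts `L_H(C_P + C_R)` evaluate the processes at random times and need not be measurable.
Their fibres nevertheless carry total mass one, which forces every fibre to be null measurable,
and this is all the conditioning over the fibres requires.
-/

open MeasureTheory Finset
open scoped ENNReal

noncomputable def poissonWeight (a : ℝ) (n : ℕ) : ℝ := Real.exp (-a) * a ^ n / n.factorial

theorem poissonWeight_nonneg {a : ℝ} (ha : 0 ≤ a) (n : ℕ) : 0 ≤ poissonWeight a n := by
  unfold poissonWeight; positivity

theorem hasSum_pow_mul_poissonWeight (β a : ℝ) :
    HasSum (fun n => β ^ n * poissonWeight a n) (Real.exp (-(a * (1 - β)))) := by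
  have h : HasSum (fun n => (β * a) ^ n / n.factorial) (Real.exp (β * a)) := by
    simpa [Real.exp_eq_exp_ℝ] using NormedSpace.expSeries_div_hasSum_exp (β * a)
  rw [show -(a * (1 - β)) = -a + β * a by ring, Real.exp_add]
  refine (h.mul_left (Real.exp (-a))).congr_fun fun n => ?_
  simp only [poissonWeight, mul_pow]; ring

theorem hasSum_pow_mul_poissonWeight_mul (β₁ β₂ a b : ℝ) :
    HasSum (fun p : ℕ × ℕ => β₁ ^ p.1 * poissonWeight a p.1 * (β₂ ^ p.2 * poissonWeight b p.2))
      (Real.exp (-(a * (1 - β₁))) * Real.exp (-(b * (1 - β₂)))) := by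
  have h₁ := hasSum_pow_mul_poissonWeight β₁ a
  have h₂ := hasSum_pow_mul_poissonWeight β₂ b
  have hs : Summable fun p : ℕ × ℕ =>
      β₁ ^ p.1 * poissonWeight a p.1 * (β₂ ^ p.2 * poissonWeight b p.2) :=
    summable_mul_of_summable_norm (f := fun n => β₁ ^ n * poissonWeight a n)
      (g := fun n => β₂ ^ n * poissonWeight b n)
      (summable_norm_iff.2 h₁.summable) (summable_norm_iff.2 h₂.summable)
  exact h₁.mul h₂ hs

/-- Joint law of two independent Poisson counts over the windows `t + u` (whole cycle) and `t`
(past cycle). -/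
noncomputable def cycleWeight (l₁ l₂ t u : ℝ) (p : ℕ × ℕ) : ℝ :=
  poissonWeight (l₁ * (t + u)) p.1 * poissonWeight (l₂ * t) p.2

theorem cycleWeight_nonneg {l₁ l₂ t u : ℝ} (hl₁ : 0 ≤ l₁) (hl₂ : 0 ≤ l₂) (ht : 0 ≤ t)
    (hu : 0 ≤ u) (p : ℕ × ℕ) : 0 ≤ cycleWeight l₁ l₂ t u p :=
  mul_nonneg (poissonWeight_nonneg (mul_nonneg hl₁ (add_nonneg ht hu)) _)
    (poissonWeight_nonneg (mul_nonneg hl₂ ht) _)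

@[fun_prop]
theorem measurable_cycleWeight (l₁ l₂ : ℝ) (p : ℕ × ℕ) :
    Measurable fun q : ℝ × ℝ => cycleWeight l₁ l₂ q.1 q.2 p := by
  unfold cycleWeight poissonWeight; fun_prop

theorem hasSum_cycleWeight (l₁ l₂ t u : ℝ) : HasSum (cycleWeight l₁ l₂ t u) 1 := by
  have h := hasSum_pow_mul_poissonWeight_mul 1 1 (l₁ * (t + u)) (l₂ * t)
  simp only [one_pow, one_mul, sub_self, mul_zero, neg_zero, Real.exp_zero] at h
  exact h

theorem hasSum_pow_mul_pow_mul_exp_mul_cycleWeight (β₁ β₂ l₁ l₂ ω t u : ℝ) :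
    HasSum (fun p : ℕ × ℕ => β₁ ^ p.1 * β₂ ^ p.2 * (Real.exp (-ω * u) * cycleWeight l₁ l₂ t u p))
      (Real.exp (-(l₁ * (1 - β₁) + l₂ * (1 - β₂)) * t - (ω + l₁ * (1 - β₁)) * u)) := by
  have h := (hasSum_pow_mul_poissonWeight_mul β₁ β₂ (l₁ * (t + u)) (l₂ * t)).mul_left
    (Real.exp (-ω * u))
  rw [← Real.exp_add, ← Real.exp_add] at h
  rw [show -(l₁ * (1 - β₁) + l₂ * (1 - β₂)) * t - (ω + l₁ * (1 - β₁)) * u =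
    -ω * u + (-(l₁ * (t + u) * (1 - β₁)) + -(l₂ * t * (1 - β₂))) by ring]
  exact h.congr_fun fun p => by simp only [cycleWeight]; ring

theorem Real.exp_neg_mul_le_one {w b : ℝ} (hw : 0 ≤ w) (hb : 0 ≤ b) : Real.exp (-w * b) ≤ 1 :=
  Real.exp_le_one_iff.2 (by nlinarith)

section Integrals

variable {Ω : Type*} [MeasurableSpace Ω] {μ : Measure Ω}

theorem hasSum_integral_of_hasSum_of_nonneg {ι : Type*} [Countable ι] {f : ι → Ω → ℝ}
    {F : Ω → ℝ} (hf : ∀ i, AEStronglyMeasurable (f i) μ) (hf0 : ∀ i x, 0 ≤ f i x)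
    (hF : ∀ x, HasSum (fun i => f i x) (F x)) (hFint : Integrable F μ) :
    HasSum (fun i => ∫ x, f i x ∂μ) (∫ x, F x ∂μ) :=
  hasSum_integral_of_dominated_convergence f hf
    (fun i => ae_of_all _ fun x => (Real.norm_of_nonneg (hf0 i x)).le)
    (ae_of_all _ fun x => (hF x).summable) (by simpa only [fun x => (hF x).tsum_eq] using hFint)
    (ae_of_all _ hF)

theorem integral_exp_neg_mul_mem_Icc [IsProbabilityMeasure μ] {B : Ω → ℝ}
    (hB0 : ∀ x, 0 ≤ B x) {w : ℝ} (hw : 0 ≤ w) : ∫ x, Real.exp (-w * B x) ∂μ ∈ Set.Icc 0 1 := by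
  refine ⟨integral_nonneg fun x => (Real.exp_pos _).le, ?_⟩
  have := norm_integral_le_of_norm_le_const (μ := μ) (f := fun x => Real.exp (-w * B x)) (C := 1)
    (ae_of_all _ fun x => ?_)
  · simpa [Real.norm_of_nonneg (integral_nonneg fun x => (Real.exp_pos _).le)] using this
  · rw [Real.norm_of_nonneg (Real.exp_pos _).le]; exact Real.exp_neg_mul_le_one hw (hB0 x)

theorem tsum_measure_preimage_singleton_eq {ι : Type*} [Countable ι] [IsProbabilityMeasure μ]
    {N : Ω → ι} {w : ι → Ω → ℝ} (hw : ∀ i, AEStronglyMeasurable (w i) μ)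
    (hw0 : ∀ i x, 0 ≤ w i x) (hw1 : ∀ x, HasSum (fun i => w i x) 1)
    (hN : ∀ i, μ.real (N ⁻¹' {i}) = ∫ x, w i x ∂μ) : ∑' i, μ (N ⁻¹' {i}) = μ Set.univ := by
  have hsum : HasSum (fun i => μ.real (N ⁻¹' {i})) 1 := by
    simpa [hN] using hasSum_integral_of_hasSum_of_nonneg hw hw0 hw1 (integrable_const (1 : ℝ))
  rw [measure_univ, ← ENNReal.ofReal_one, ← hsum.tsum_eq,
    ENNReal.ofReal_tsum_of_nonneg (fun i => measureReal_nonneg) hsum.summable]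
  exact tsum_congr fun i => (ofReal_measureReal).symm

theorem hasSum_setIntegral_eq_integral_exp_past_residual [IsFiniteMeasure μ]
    {CP CR : Ω → ℝ} (hCP : Measurable CP) (hCR : Measurable CR)
    (hCPnn : ∀ x, 0 ≤ CP x) (hCRnn : ∀ x, 0 ≤ CR x) {l₁ l₂ β₁ β₂ ω : ℝ} (hl₁ : 0 ≤ l₁)
    (hl₂ : 0 ≤ l₂) (hβ₁ : β₁ ∈ Set.Icc 0 1) (hβ₂ : β₂ ∈ Set.Icc 0 1) (hω : 0 ≤ ω)
    {A : ℕ × ℕ → Set Ω} {F : ℕ × ℕ → Ω → ℝ}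
    (hF : ∀ p, ∫ x in A p, F p x ∂μ =
      β₁ ^ p.1 * β₂ ^ p.2 * ∫ x, Real.exp (-ω * CR x) * cycleWeight l₁ l₂ (CP x) (CR x) p ∂μ) :
    HasSum (fun p => ∫ x in A p, F p x ∂μ)
      (∫ x, Real.exp (-(l₁ * (1 - β₁) + l₂ * (1 - β₂)) * CP x - (ω + l₁ * (1 - β₁)) * CR x) ∂μ) := by
  obtain ⟨hβ₁0, hβ₁1⟩ := hβ₁
  obtain ⟨hβ₂0, hβ₂1⟩ := hβ₂
  simp_rw [hF, ← integral_const_mul]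
  refine hasSum_integral_of_hasSum_of_nonneg (fun p => by fun_prop) (fun p x => ?_)
    (fun x => hasSum_pow_mul_pow_mul_exp_mul_cycleWeight _ _ _ _ _ _ _) ?_
  · exact mul_nonneg (mul_nonneg (pow_nonneg hβ₁0 _) (pow_nonneg hβ₂0 _))
      (mul_nonneg (Real.exp_pos _).le (cycleWeight_nonneg hl₁ hl₂ (hCPnn x) (hCRnn x) p))
  · refine Integrable.of_bound (by fun_prop) 1 (ae_of_all _ fun x => ?_)
    rw [Real.norm_of_nonneg (Real.exp_pos _).le, Real.exp_le_one_iff]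
    have hP : 0 ≤ l₁ * (1 - β₁) + l₂ * (1 - β₂) :=
      add_nonneg (mul_nonneg hl₁ (sub_nonneg.2 hβ₁1)) (mul_nonneg hl₂ (sub_nonneg.2 hβ₂1))
    have hR : 0 ≤ ω + l₁ * (1 - β₁) := add_nonneg hω (mul_nonneg hl₁ (sub_nonneg.2 hβ₁1))
    nlinarith [mul_nonneg hP (hCPnn x), mul_nonneg hR (hCRnn x)]

end Integrals

section FiberDecomposition

variable {Ω ι : Type*} [MeasurableSpace Ω] [Countable ι] {μ : Measure Ω} [IsFiniteMeasure μ]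
  {N : Ω → ι}

/-- The measurable hulls `T j` of the fibres cover `Ω` with total mass `μ univ`, so the
multiplicity `∑ j, 𝟙_{T j}` is `1` almost everywhere; a point of `T i` outside the fibre `N ⁻¹' {i}`
lies in a second hull and has multiplicity at least `2`. -/
theorem nullMeasurableSet_preimage_singleton_of_tsum_measure
    (hN : ∑' i, μ (N ⁻¹' {i}) = μ Set.univ) (i : ι) : NullMeasurableSet (N ⁻¹' {i}) μ := by
  classical
  set T : ι → Set Ω := fun j => toMeasurable μ (N ⁻¹' {j})
  set S : Ω → ℝ≥0∞ := fun x => ∑' j, (T j).indicator 1 x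
  have hmem : ∀ x, x ∈ T (N x) := fun x => subset_toMeasurable μ _ rfl
  have hS_ge : ∀ x, 1 ≤ S x := fun x => by
    simpa [Set.indicator_of_mem (hmem x)] using
      ENNReal.le_tsum (f := fun j => (T j).indicator 1 x) (N x)
  have hS_meas : Measurable S :=
    Measurable.tsum fun j => measurable_one.indicator (measurableSet_toMeasurable _ _)
  have hS_lintegral : ∫⁻ x, S x ∂μ ≤ ∫⁻ _, 1 ∂μ := by
    rw [lintegral_tsum fun j =>
      (measurable_one.indicator (measurableSet_toMeasurable _ _)).aemeasurable]
    simp [lintegral_indicator_one (measurableSet_toMeasurable _ _), measure_toMeasurable, hN]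
  have hS_ae : ∀ᵐ x ∂μ, 1 = S x :=
    ae_eq_of_ae_le_of_lintegral_le (ae_of_all _ hS_ge) (by simp) hS_meas.aemeasurable hS_lintegral
  refine (measurableSet_toMeasurable μ (N ⁻¹' {i})).nullMeasurableSet.congr
    (ae_eq_set.2 ⟨?_, ?_⟩)
  · refine measure_mono_null (t := {x | ¬ 1 = S x}) ?_ (ae_iff.1 hS_ae)
    rintro x ⟨hxT, hxA⟩ hx
    have hne : i ≠ N x := fun h => hxA h.symm
    have := ENNReal.sum_le_tsum (f := fun j => (T j).indicator 1 x) {i, N x}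
    rw [Finset.sum_pair hne, Set.indicator_of_mem hxT, Set.indicator_of_mem (hmem x)] at this
    simp [S, ← hx, one_add_one_eq_two] at this
  · simp [Set.sdiff_eq_empty.2 (subset_toMeasurable μ _)]

theorem aemeasurable_of_tsum_measure_preimage_singleton [MeasurableSpace ι]
    [MeasurableSingletonClass ι] (hN : ∑' i, μ (N ⁻¹' {i}) = μ Set.univ) : AEMeasurable N μ :=
  NullMeasurable.aemeasurable <| measurable_to_countable' fun i =>
    nullMeasurableSet_preimage_singleton_of_tsum_measure hN i

theorem hasSum_setIntegral_preimage_singleton (hN : ∑' i, μ (N ⁻¹' {i}) = μ Set.univ)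
    {f : ι → Ω → ℝ} (hf : ∀ i, Measurable (f i)) {C : ℝ} (hC : ∀ i x, |f i x| ≤ C) :
    HasSum (fun i => ∫ x in N ⁻¹' {i}, f i x ∂μ) (∫ x, f (N x) x ∂μ) := by
  let _ : MeasurableSpace ι := ⊤
  have hF : AEStronglyMeasurable (fun x => f (N x) x) μ :=
    ((measurable_from_prod_countable_left (f := fun q : Ω × ι => f q.2 q.1) hf).comp_aemeasurable
      (aemeasurable_id.prodMk
        (aemeasurable_of_tsum_measure_preimage_singleton hN))).aestronglyMeasurable
  have hcover : ⋃ i, N ⁻¹' {i} = Set.univ := by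
    rw [← Set.preimage_iUnion, Set.iUnion_of_singleton, Set.preimage_univ]
  have hsum := hasSum_integral_iUnion_ae (μ := μ)
    (nullMeasurableSet_preimage_singleton_of_tsum_measure hN)
    (fun i j hij => (Set.disjoint_singleton.2 hij).preimage N |>.aedisjoint)
    (Integrable.of_bound hF C (ae_of_all _ fun x => hC (N x) x)).integrableOn
  rw [hcover, setIntegral_univ] at hsum
  refine hsum.congr_fun fun i => setIntegral_congr_fun₀
    (nullMeasurableSet_preimage_singleton_of_tsum_measure hN i) fun x hx => ?_
  simp only [Set.mem_singleton_iff.1 hx]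

end FiberDecomposition

theorem stmt_13_general {Ω : Type*} [MeasurableSpace Ω] (μ : Measure Ω) [IsProbabilityMeasure μ]
    (CP CR : Ω → ℝ) (hCP : Measurable CP) (hCR : Measurable CR)
    (hCPnn : ∀ x, 0 ≤ CP x) (hCRnn : ∀ x, 0 ≤ CR x)
    (EC : ℝ)
    (γ : ℝ → ℝ)
    -- joint LST of past and residual cycle time
    (hjoint : ∀ ωP ωR : ℝ, 0 ≤ ωP → 0 ≤ ωR → ωP ≠ ωR →
      ∫ x, Real.exp (-ωP * CP x - ωR * CR x) ∂μ = (γ ωP - γ ωR) / ((ωR - ωP) * EC))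
    (lH lK : ℝ) (hlH : 0 ≤ lH) (hlK : 0 < lK)
    (Lh Lk : ℝ → Ω → ℕ) (BH BK : ℕ → Ω → ℝ)
    (hBH : ∀ j, Measurable (BH j)) (hBK : ∀ j, Measurable (BK j))
    (hBHnn : ∀ j x, 0 ≤ BH j x) (hBKnn : ∀ j x, 0 ≤ BK j x)
    (βH βK : ℝ → ℝ)
    -- common LSTs of the i.i.d. service-time sequences
    (hβH : ∀ (j : ℕ) (w : ℝ), 0 ≤ w → ∫ x, Real.exp (-w * BH j x) ∂μ = βH w)
    (hβK : ∀ (j : ℕ) (w : ℝ), 0 ≤ w → ∫ x, Real.exp (-w * BK j x) ∂μ = βK w)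
    -- `Lh`, `Lk` are independent Poisson processes of rates `lH`, `lK`, independent of
    -- `(CP, CR)`: conditionally on `(CP, CR)`, the counts `Lh (CP + CR)` and `Lk CP` are
    -- independent Poisson with parameters `lH (CP + CR)` and `lK CP`
    (hPoisson : ∀ (m n : ℕ) (g : ℝ → ℝ → ℝ), Measurable (Function.uncurry g) →
      (∀ t u, 0 ≤ g t u ∧ g t u ≤ 1) →
      ∫ x in {x | Lh (CP x + CR x) x = m ∧ Lk (CP x) x = n}, g (CP x) (CR x) ∂μ =
        ∫ x, g (CP x) (CR x) *
          (Real.exp (-(lH * (CP x + CR x))) * (lH * (CP x + CR x)) ^ m / m.factorial) *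
          (Real.exp (-(lK * CP x)) * (lK * CP x) ^ n / n.factorial) ∂μ)
    -- the service times are independent of everything else and i.i.d.: conditionally on
    -- the counts, the compound sums factorize through the LSTs `βH`, `βK`
    (hBindep : ∀ (m n : ℕ) (w : ℝ), 0 ≤ w →
      ∫ x in {x | Lh (CP x + CR x) x = m ∧ Lk (CP x) x = n},
          Real.exp (-w * (CR x + (∑ j ∈ range m, BH j x) + ∑ j ∈ range n, BK j x)) ∂μ =
        (βH w) ^ m * (βK w) ^ n *
          ∫ x in {x | Lh (CP x + CR x) x = m ∧ Lk (CP x) x = n},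
            Real.exp (-w * CR x) ∂μ)
    (ω : ℝ) (hω : 0 < ω) (hne : ω ≠ lK * (1 - βK ω)) :
    ∫ x, Real.exp (-ω * (CR x +
        (∑ j ∈ range (Lh (CP x + CR x) x), BH j x) +
        ∑ j ∈ range (Lk (CP x) x), BK j x)) ∂μ =
      (γ (lH * (1 - βH ω) + lK * (1 - βK ω)) - γ (ω + lH * (1 - βH ω))) /
        ((ω - lK * (1 - βK ω)) * EC) := by
  set N : Ω → ℕ × ℕ := fun x => (Lh (CP x + CR x) x, Lk (CP x) x)
  set F : ℕ × ℕ → Ω → ℝ := fun p x =>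
    Real.exp (-ω * (CR x + (∑ j ∈ range p.1, BH j x) + ∑ j ∈ range p.2, BK j x))
  have hfiber : ∀ p : ℕ × ℕ,
      N ⁻¹' {p} = {x | Lh (CP x + CR x) x = p.1 ∧ Lk (CP x) x = p.2} :=
    fun p => Set.ext fun x => Prod.ext_iff
  have hcond : ∀ p {φ : ℝ → ℝ}, Measurable φ → (∀ u, 0 ≤ φ u ∧ φ u ≤ 1) →
      ∫ x in N ⁻¹' {p}, φ (CR x) ∂μ = ∫ x, φ (CR x) * cycleWeight lH lK (CP x) (CR x) p ∂μ := by
    intro p φ hφ hφ01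
    have h := hPoisson p.1 p.2 (fun _ u => φ u) (hφ.comp measurable_snd) (fun _ u => hφ01 u)
    rw [hfiber]
    simp only [mul_assoc] at h
    exact h
  have hmass : ∑' p, μ (N ⁻¹' {p}) = μ Set.univ :=
    tsum_measure_preimage_singleton_eq (fun p => Measurable.aestronglyMeasurable (by fun_prop))
      (fun p x => cycleWeight_nonneg hlH hlK.le (hCPnn x) (hCRnn x) p)
      (fun x => hasSum_cycleWeight _ _ _ _) fun p => by
        simpa using hcond p (φ := fun _ => 1) measurable_const fun _ => ⟨zero_le_one, le_rfl⟩
  have hF_le : ∀ p x, |F p x| ≤ 1 := fun p x => by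
    rw [abs_of_pos (Real.exp_pos _)]
    exact Real.exp_neg_mul_le_one hω.le (add_nonneg (add_nonneg (hCRnn x)
      (sum_nonneg fun j _ => hBHnn j x)) (sum_nonneg fun j _ => hBKnn j x))
  have htotal := hasSum_setIntegral_preimage_singleton hmass (fun p => by fun_prop) hF_le
  have hβH01 := hβH 0 ω hω.le ▸ integral_exp_neg_mul_mem_Icc (hBHnn 0) hω.le
  have hβK01 := hβK 0 ω hω.le ▸ integral_exp_neg_mul_mem_Icc (hBKnn 0) hω.le
  have hmix := hasSum_setIntegral_eq_integral_exp_past_residual (A := fun p => N ⁻¹' {p}) (F := F)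
    hCP hCR hCPnn hCRnn hlH hlK.le hβH01 hβK01 hω.le fun p => by
      have h := hcond p (φ := fun u => Real.exp (-ω * max u 0)) (by fun_prop)
        fun u => ⟨(Real.exp_pos _).le, Real.exp_neg_mul_le_one hω.le (le_max_right _ _)⟩
      simp only [max_eq_left (hCRnn _)] at h
      simp only [F]
      rw [hfiber, hBindep p.1 p.2 ω hω.le, ← hfiber, h]
  calc _ = _ := htotal.unique hmix
    _ = _ := hjoint _ _ (by nlinarith [hβH01.2, hβK01.2]) (by nlinarith [hβH01.2])
        (by contrapose! hne; linarith)
    _ = _ := by congr 2; ring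

/-- Waiting-time LST at a gated priority queue.  `(CP, CR)` are the past and residual cycle
times, with joint LST `(γ ωP - γ ωR)/((ωR - ωP) E C)`.  `Lh t` and `Lk t` are independent
Poisson processes of rates `lH` and `lK`, independent of `(CP, CR)` (expressed through the
conditional Poisson law of the counts `Lh (CP + CR)` and `Lk CP` given `(CP, CR)`), and
`BH j`, `BK j` are i.i.d. sequences with LSTs `βH, βK` independent of everything else
(expressed through the conditional factorization of their compound sums).  Then the LST of
`CR + ∑_{j < Lh (CP+CR)} BH j + ∑_{j < Lk CP} BK j` is
`(γ (lH (1-βH ω) + lK (1-βK ω)) - γ (ω + lH (1-βH ω))) / ((ω - lK (1-βK ω)) E C)`. -/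
theorem stmt_13 {Ω : Type*} [MeasurableSpace Ω] (μ : Measure Ω) [IsProbabilityMeasure μ]
    (CP CR : Ω → ℝ) (hCP : Measurable CP) (hCR : Measurable CR)
    (hCPnn : ∀ x, 0 ≤ CP x) (hCRnn : ∀ x, 0 ≤ CR x)
    (EC : ℝ) (hEC : 0 < EC)
    (γ : ℝ → ℝ)
    -- joint LST of past and residual cycle time
    (hjoint : ∀ ωP ωR : ℝ, 0 ≤ ωP → 0 ≤ ωR → ωP ≠ ωR →
      ∫ x, Real.exp (-ωP * CP x - ωR * CR x) ∂μ = (γ ωP - γ ωR) / ((ωR - ωP) * EC))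
    (lH lK : ℝ) (hlH : 0 ≤ lH) (hlK : 0 < lK)
    (Lh Lk : ℝ → Ω → ℕ) (BH BK : ℕ → Ω → ℝ)
    (hLh : ∀ t, Measurable (Lh t)) (hLk : ∀ t, Measurable (Lk t))
    (hBH : ∀ j, Measurable (BH j)) (hBK : ∀ j, Measurable (BK j))
    (hBHnn : ∀ j x, 0 ≤ BH j x) (hBKnn : ∀ j x, 0 ≤ BK j x)
    (βH βK : ℝ → ℝ)
    -- common LSTs of the i.i.d. service-time sequences
    (hβH : ∀ (j : ℕ) (w : ℝ), 0 ≤ w → ∫ x, Real.exp (-w * BH j x) ∂μ = βH w)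
    (hβK : ∀ (j : ℕ) (w : ℝ), 0 ≤ w → ∫ x, Real.exp (-w * BK j x) ∂μ = βK w)
    -- `Lh`, `Lk` are independent Poisson processes of rates `lH`, `lK`, independent of
    -- `(CP, CR)`: conditionally on `(CP, CR)`, the counts `Lh (CP + CR)` and `Lk CP` are
    -- independent Poisson with parameters `lH (CP + CR)` and `lK CP`
    (hPoisson : ∀ (m n : ℕ) (g : ℝ → ℝ → ℝ), Measurable (Function.uncurry g) →
      (∀ t u, 0 ≤ g t u ∧ g t u ≤ 1) →
      ∫ x in {x | Lh (CP x + CR x) x = m ∧ Lk (CP x) x = n}, g (CP x) (CR x) ∂μ =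
        ∫ x, g (CP x) (CR x) *
          (Real.exp (-(lH * (CP x + CR x))) * (lH * (CP x + CR x)) ^ m / m.factorial) *
          (Real.exp (-(lK * CP x)) * (lK * CP x) ^ n / n.factorial) ∂μ)
    -- the service times are independent of everything else and i.i.d.: conditionally on
    -- the counts, the compound sums factorize through the LSTs `βH`, `βK`
    (hBindep : ∀ (m n : ℕ) (w : ℝ), 0 ≤ w →
      ∫ x in {x | Lh (CP x + CR x) x = m ∧ Lk (CP x) x = n},
          Real.exp (-w * (CR x + (∑ j ∈ range m, BH j x) + ∑ j ∈ range n, BK j x)) ∂μ =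
        (βH w) ^ m * (βK w) ^ n *
          ∫ x in {x | Lh (CP x + CR x) x = m ∧ Lk (CP x) x = n},
            Real.exp (-w * CR x) ∂μ)
    (ω : ℝ) (hω : 0 < ω) (hne : ω ≠ lK * (1 - βK ω)) :
    ∫ x, Real.exp (-ω * (CR x +
        (∑ j ∈ range (Lh (CP x + CR x) x), BH j x) +
        ∑ j ∈ range (Lk (CP x) x), BK j x)) ∂μ =
      (γ (lH * (1 - βH ω) + lK * (1 - βK ω)) - γ (ω + lH * (1 - βH ω))) /
        ((ω - lK * (1 - βK ω)) * EC) :=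
  stmt_13_general μ CP CR hCP hCR hCPnn hCRnn EC γ hjoint lH lK hlH hlK Lh Lk BH BK hBH hBK hBHnn
    hBKnn βH βK hβH hβK hPoisson hBindep ω hω hne
end

section
/- Suppose the LST of the waiting time of a gated-priority customer is given for $\omega > 0$ by $E[e^{-\omega W_{ik}}] = \frac{\gamma(\lambda_H(1-\beta_H(\omega)) + \lambda_k(1-\beta_k(\omega))) - \gamma(\omega + \lambda_H(1-\beta_H(\omega)))}{[\omega - \lambda_k(1-\beta_k(\omega))]E[C]}$, where $\gamma$, $\beta_H$, $\beta_k$ are twice continuously differentiable LSTs at $0$ with $-\gamma'(0) = E[C]$, $\gamma''(0) = E[C^2]$, $-\beta_H'(0) = E[B_H]$, $-\beta_k'(0) = E[B_k]$, and set $\rho_H = \lambda_H E[B_H]$, $\rho_k = \lambda_k E[B_k]$. Then $E[W_{ik}] = (1 + 2\rho_H + \rho_k)\frac{E[C^2]}{2E[C]}$. -/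
/-!
Write `f ω = E[e^{-ω W}]`. By dominated convergence `(1 - f ω) / ω → E[W]` as `ω ↓ 0`.
With `u` and `v` the two arguments of `γ` in the hypothesis, the denominator is `(v - u) E[C]`,
so `f ω E[C]` is minus the divided difference `γ[u, v]`. A second-order Taylor expansion of `γ`
that is uniform in the base point gives `γ[u, v] = γ'(0) + γ''(0) (u + v) / 2 + o(ω)`, and
`u + v = (1 + 2ρH + ρk) ω + o(ω)`. Uniformity is what makes this work even when `v - u` is
not of exact order `ω` (as happens for `ρk = 1`).
-/

open MeasureTheory Filter Topology Asymptotics Set Metric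

theorem isLittleO_taylor_two_of_hasStrictDerivAt {g g' : ℝ → ℝ} {a L : ℝ}
    (hg : ∀ᶠ y in 𝓝 a, HasDerivAt g (g' y) y) (hg' : HasStrictDerivAt g' L a) :
    (fun p : ℝ × ℝ => g p.1 - g p.2 - (p.1 - p.2) * g' p.2 - (p.1 - p.2) ^ 2 / 2 * L)
      =o[𝓝 (a, a)] fun p => (p.1 - p.2) ^ 2 := by
  refine isLittleO_iff.mpr fun c hc => ?_
  have hg'c := (hasDerivAtFilter_iff_isLittleO.mp hg').def hc
  have hg_fst : ∀ᶠ p : ℝ × ℝ in 𝓝 (a, a), HasDerivAt g (g' p.1) p.1 :=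
    continuousAt_fst.eventually (p := fun y => HasDerivAt g (g' y) y) hg
  obtain ⟨ε, hε, hball⟩ := eventually_nhds_iff_ball.mp (hg_fst.and hg'c)
  refine eventually_nhds_iff_ball.mpr ⟨ε, hε, ?_⟩
  rintro ⟨x, y⟩ hxy
  rw [← ball_prod_same, prodMk_mem_set_prod_eq] at hxy
  have hpair : ∀ t ∈ uIcc y x, (t, y) ∈ ball (a, a) ε := fun t ht => by
    rw [← ball_prod_same]
    exact ⟨(convex_ball a ε).segment_subset hxy.2 hxy.1 (segment_eq_uIcc y x ▸ ht), hxy.2⟩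
  -- Mean value inequality for the remainder with base point `y`, along the segment from `y` to `x`.
  have hderiv : ∀ t ∈ uIcc y x, HasDerivWithinAt
      (fun t => g t - (t - y) * g' y - (t - y) ^ 2 / 2 * L) (g' t - g' y - (t - y) * L)
      (uIcc y x) t := by
    intro t ht
    have hlin : HasDerivAt (fun t => (t - y) * g' y) (g' y) t := by
      simpa using ((hasDerivAt_id t).sub_const y).mul_const (g' y)
    have hsq : HasDerivAt (fun t => (t - y) ^ 2 / 2 * L) ((t - y) * L) t :=
      ((((hasDerivAt_id' t).sub_const y).pow 2).div_const 2).mul_const L |>.congr_deriv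
        (by norm_num)
    exact (((hball _ (hpair t ht)).1.sub hlin).sub hsq).hasDerivWithinAt
  have hbound : ∀ t ∈ uIcc y x, ‖g' t - g' y - (t - y) * L‖ ≤ c * ‖x - y‖ := fun t ht =>
    calc _ ≤ c * ‖t - y‖ := by simpa only [smul_eq_mul] using (hball _ (hpair t ht)).2
      _ ≤ c * ‖x - y‖ := by gcongr; exact abs_sub_left_of_mem_uIcc ht
  have hmvt := (convex_uIcc y x).norm_image_sub_le_of_norm_hasDerivWithin_le hderiv hbound
    left_mem_uIcc right_mem_uIcc
  calc _ = ‖(g x - (x - y) * g' y - (x - y) ^ 2 / 2 * L) -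
          (g y - (y - y) * g' y - (y - y) ^ 2 / 2 * L)‖ := by ring_nf
    _ ≤ c * ‖x - y‖ * ‖x - y‖ := hmvt
    _ = c * ‖(x - y) ^ 2‖ := by rw [norm_pow]; ring

/-- The divided difference `γ[u ω, v ω]` is `γ'(b) + (u' + v') / 2 * γ''(b) * (ω - a) + o(ω - a)`,
stated multiplied out by `u ω - v ω`, so that it also covers the points where `u ω = v ω`. -/
theorem ContDiffAt.isLittleO_comp_sub_comp {γ u v : ℝ → ℝ} {a b u' v' : ℝ}
    (hγ : ContDiffAt ℝ 2 γ b) (hu : HasDerivAt u u' a) (hv : HasDerivAt v v' a)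
    (hua : u a = b) (hva : v a = b) :
    (fun ω => γ (u ω) - γ (v ω) -
        (u ω - v ω) * (deriv γ b + (u' + v') / 2 * deriv (deriv γ) b * (ω - a)))
      =o[𝓝 a] fun ω => (u ω - v ω) * (ω - a) := by
  have hγ' : ∀ᶠ y in 𝓝 b, HasDerivAt γ (deriv γ y) y :=
    (hγ.eventually (by simp)).mono fun y hy => (hy.differentiableAt two_ne_zero).hasDerivAt
  have hγ'' : HasStrictDerivAt (deriv γ) (deriv (deriv γ) b) b :=
    (hγ.derivWithin (m := 1) (by norm_num)).hasStrictDerivAt one_ne_zero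
  have huv : Tendsto (fun ω => (u ω, v ω)) (𝓝 a) (𝓝 (b, b)) := by
    simpa only [hua, hva] using hu.continuousAt.tendsto.prodMk_nhds hv.continuousAt.tendsto
  have hdiff : (fun ω => u ω - v ω) =O[𝓝 a] fun ω => ω - a := by
    simpa [hua, hva] using (hu.sub hv).isBigO_sub
  have hsq : (fun ω => (u ω - v ω) ^ 2) =O[𝓝 a] fun ω => (u ω - v ω) * (ω - a) := by
    simpa only [pow_two] using (isBigO_refl (fun ω => u ω - v ω) (𝓝 a)).mul hdiff
  have htaylor :=
    ((isLittleO_taylor_two_of_hasStrictDerivAt hγ' hγ'').comp_tendsto huv).trans_isBigO hsq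
  have hγ'_v := (hγ''.hasDerivAt.isLittleO.comp_tendsto (hva ▸ hv.continuousAt)).trans_isBigO
    (hva ▸ hv.isBigO_sub)
  have hu_lin := hua ▸ hu.isLittleO
  have hv_lin := hva ▸ hv.isLittleO
  refine (htaylor.add ((isBigO_refl (fun ω => u ω - v ω) (𝓝 a)).mul_isLittleO
    (hγ'_v.add ((hu_lin.add hv_lin).const_mul_left (deriv (deriv γ) b / 2))))).congr_left
    fun ω => ?_
  simp only [Function.comp_apply, smul_eq_mul]
  ring

section Laplace

variable {Ω : Type*} [MeasurableSpace Ω] {μ : Measure Ω} {W : Ω → ℝ}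

lemma integrable_exp_neg_mul [IsFiniteMeasure μ] (hW : 0 ≤ᵐ[μ] W)
    (hWm : AEStronglyMeasurable W μ) {ω : ℝ} (hω : 0 ≤ ω) :
    Integrable (fun x => Real.exp (-ω * W x)) μ := by
  refine .of_bound ((by fun_prop : Continuous fun w => Real.exp (-ω * w))
    |>.comp_aestronglyMeasurable hWm) 1 ?_
  filter_upwards [hW] with x hx
  rw [Real.norm_eq_abs, abs_of_pos (Real.exp_pos _), Real.exp_le_one_iff, neg_mul, neg_nonpos]
  exact mul_nonneg hω hx

lemma tendsto_one_sub_exp_neg_mul_div (w : ℝ) :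
    Tendsto (fun ω => (1 - Real.exp (-ω * w)) / ω) (𝓝[>] 0) (𝓝 w) := by
  have h : HasDerivAt (fun ω => -Real.exp (-ω * w)) w 0 := by
    simpa using (((hasDerivAt_neg' (0 : ℝ)).mul_const w).exp).fun_neg
  refine h.tendsto_slope_zero_right.congr fun ω => ?_
  simp only [zero_add, neg_zero, zero_mul, Real.exp_zero, smul_eq_mul]
  ring

lemma abs_one_sub_exp_neg_mul_div_le {ω w : ℝ} (hω : 0 < ω) (hw : 0 ≤ w) :
    |(1 - Real.exp (-ω * w)) / ω| ≤ w := by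
  have h1 : Real.exp (-ω * w) ≤ 1 := by
    rw [Real.exp_le_one_iff, neg_mul, neg_nonpos]
    exact mul_nonneg hω.le hw
  have h2 : 1 - ω * w ≤ Real.exp (-ω * w) := by linarith [Real.add_one_le_exp (-ω * w)]
  rw [abs_of_nonneg (div_nonneg (by linarith) hω.le), div_le_iff₀ hω]
  linarith

theorem tendsto_one_sub_integral_exp_neg_mul_div [IsProbabilityMeasure μ] (hW : 0 ≤ᵐ[μ] W)
    (hint : Integrable W μ) :
    Tendsto (fun ω => (1 - ∫ x, Real.exp (-ω * W x) ∂μ) / ω) (𝓝[>] 0)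
      (𝓝 (∫ x, W x ∂μ)) := by
  have hdom : Tendsto (fun ω => ∫ x, (1 - Real.exp (-ω * W x)) / ω ∂μ) (𝓝[>] 0)
      (𝓝 (∫ x, W x ∂μ)) := by
    refine tendsto_integral_filter_of_dominated_convergence W ?_ ?_ hint
      (ae_of_all _ fun x => tendsto_one_sub_exp_neg_mul_div (W x))
    · exact .of_forall fun ω => (by fun_prop : Continuous fun w => (1 - Real.exp (-ω * w)) / ω)
        |>.comp_aestronglyMeasurable hint.1
    · filter_upwards [self_mem_nhdsWithin] with ω hω
      filter_upwards [hW] with x hx using abs_one_sub_exp_neg_mul_div_le hω hx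
  refine hdom.congr' ?_
  filter_upwards [self_mem_nhdsWithin] with ω hω
  rw [integral_div, integral_sub (integrable_const 1) (integrable_exp_neg_mul hW hint.1 hω.le)]
  simp

end Laplace

theorem tendsto_mul_one_sub_div_of_eq_divided_difference {γ u v f : ℝ → ℝ} {u' v' c : ℝ}
    (hγ : ContDiffAt ℝ 2 γ 0) (hγ' : deriv γ 0 = -c) (hu : HasDerivAt u u' 0)
    (hv : HasDerivAt v v' 0) (hu0 : u 0 = 0) (hv0 : v 0 = 0)
    (hf : ∀ᶠ ω in 𝓝[>] 0, (v ω - u ω) * c ≠ 0 ∧ f ω = (γ (u ω) - γ (v ω)) / ((v ω - u ω) * c)) :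
    Tendsto (fun ω => c * ((1 - f ω) / ω)) (𝓝[>] 0) (𝓝 ((u' + v') / 2 * deriv (deriv γ) 0)) := by
  have hrem := hγ.isLittleO_comp_sub_comp hu hv hu0 hv0
  rw [hγ'] at hrem
  have := (hrem.tendsto_div_nhds_zero.mono_left (nhdsWithin_le_nhds (s := Ioi 0))).const_add
    ((u' + v') / 2 * deriv (deriv γ) 0)
  rw [add_zero] at this
  refine this.congr' ?_
  filter_upwards [self_mem_nhdsWithin, hf] with ω hω ⟨hden, hfω⟩
  have hω0 : ω ≠ 0 := hω.ne'
  have hvu : v ω - u ω ≠ 0 := left_ne_zero_of_mul hden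
  have hc : c ≠ 0 := right_ne_zero_of_mul hden
  have huv : u ω - v ω ≠ 0 := fun h => hvu (by linarith)
  rw [hfω]
  field_simp
  ring

theorem stmt_14_general {Ω : Type*} [MeasurableSpace Ω] (μ : Measure Ω) [IsProbabilityMeasure μ]
    (W : Ω → ℝ) (hWnn : ∀ x, 0 ≤ W x) (hWint : Integrable W μ)
    (γ βH βk : ℝ → ℝ)
    (hγC2 : ContDiffAt ℝ 2 γ 0) (hβHC2 : ContDiffAt ℝ 2 βH 0) (hβkC2 : ContDiffAt ℝ 2 βk 0)
    (hβH0 : βH 0 = 1) (hβk0 : βk 0 = 1)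
    (EC EC2 EBH EBk lH lk : ℝ)
    (hEC : deriv γ 0 = -EC) (hEC2 : deriv (deriv γ) 0 = EC2)
    (hEBH : deriv βH 0 = -EBH) (hEBk : deriv βk 0 = -EBk)
    (ρH ρk : ℝ) (hρH : ρH = lH * EBH) (hρk : ρk = lk * EBk)
    (hW : ∀ ω : ℝ, 0 < ω →
      ∫ x, Real.exp (-ω * W x) ∂μ =
        (γ (lH * (1 - βH ω) + lk * (1 - βk ω)) - γ (ω + lH * (1 - βH ω))) /
          ((ω - lk * (1 - βk ω)) * EC)) :
    ∫ x, W x ∂μ = (1 + 2 * ρH + ρk) * (EC2 / (2 * EC)) := by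
  have hW0 : 0 ≤ᵐ[μ] W := ae_of_all _ hWnn
  -- A zero denominator in `hW` would make the positive Laplace transform `0`.
  have hden : ∀ ω : ℝ, 0 < ω → (ω - lk * (1 - βk ω)) * EC ≠ 0 := fun ω hω h0 => by
    have hpos := integral_exp_pos (μ := μ) (integrable_exp_neg_mul hW0 hWint.1 hω.le)
    rw [hW ω hω, h0, div_zero] at hpos
    exact hpos.false
  have hEC0 : EC ≠ 0 := right_ne_zero_of_mul (hden 1 one_pos)
  have hβH : HasDerivAt βH (-EBH) 0 := hEBH ▸ (hβHC2.differentiableAt two_ne_zero).hasDerivAt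
  have hβk : HasDerivAt βk (-EBk) 0 := hEBk ▸ (hβkC2.differentiableAt two_ne_zero).hasDerivAt
  have hu : HasDerivAt (fun ω => lH * (1 - βH ω) + lk * (1 - βk ω)) (ρH + ρk) 0 :=
    (((hβH.const_sub 1).const_mul lH).add ((hβk.const_sub 1).const_mul lk)).congr_deriv
      (by rw [hρH, hρk]; ring)
  have hv : HasDerivAt (fun ω => ω + lH * (1 - βH ω)) (1 + ρH) 0 :=
    ((hasDerivAt_id' 0).add ((hβH.const_sub 1).const_mul lH)).congr_deriv (by rw [hρH]; ring)
  have hlim := tendsto_mul_one_sub_div_of_eq_divided_difference hγC2 hEC hu hv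
    (by simp [hβH0, hβk0]) (by simp [hβH0]) (f := fun ω => ∫ x, Real.exp (-ω * W x) ∂μ) <| by
    filter_upwards [self_mem_nhdsWithin] with ω hω
    have hvu : ω + lH * (1 - βH ω) - (lH * (1 - βH ω) + lk * (1 - βk ω)) =
        ω - lk * (1 - βk ω) := by ring
    exact hvu ▸ ⟨hden ω hω, hW ω hω⟩
  have hmean := tendsto_nhds_unique
    ((tendsto_one_sub_integral_exp_neg_mul_div hW0 hWint).const_mul EC) hlim
  apply mul_left_cancel₀ hEC0
  rw [hmean, hEC2]
  field_simp
  ring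

/-- Mean waiting time at a gated priority queue from the waiting-time LST: if
`E[e^{-ω W}] = (γ(λH(1-βH ω) + λk(1-βk ω)) - γ(ω + λH(1-βH ω))) / ((ω - λk(1-βk ω)) E C)`
with `γ, βH, βk` twice continuously differentiable LSTs at `0`, `-γ'(0) = E C`,
`γ''(0) = E C²`, `-βH'(0) = E BH`, `-βk'(0) = E Bk`, `ρH = λH E BH`, `ρk = λk E Bk`, then
`E W = (1 + 2 ρH + ρk) * E C² / (2 E C)`. -/
theorem stmt_14 {Ω : Type*} [MeasurableSpace Ω] (μ : Measure Ω) [IsProbabilityMeasure μ]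
    (W : Ω → ℝ) (hWmeas : Measurable W) (hWnn : ∀ x, 0 ≤ W x) (hWint : Integrable W μ)
    (γ βH βk : ℝ → ℝ)
    (hγC2 : ContDiffAt ℝ 2 γ 0) (hβHC2 : ContDiffAt ℝ 2 βH 0) (hβkC2 : ContDiffAt ℝ 2 βk 0)
    (hγ0 : γ 0 = 1) (hβH0 : βH 0 = 1) (hβk0 : βk 0 = 1)
    (EC EC2 EBH EBk lH lk : ℝ)
    (hEC : deriv γ 0 = -EC) (hEC2 : deriv (deriv γ) 0 = EC2)
    (hEBH : deriv βH 0 = -EBH) (hEBk : deriv βk 0 = -EBk)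
    (hECpos : 0 < EC) (hEC2nn : 0 ≤ EC2) (hEBHnn : 0 ≤ EBH) (hEBknn : 0 ≤ EBk)
    (hlH : 0 ≤ lH) (hlk : 0 < lk)
    (ρH ρk : ℝ) (hρH : ρH = lH * EBH) (hρk : ρk = lk * EBk)
    (hW : ∀ ω : ℝ, 0 < ω →
      ∫ x, Real.exp (-ω * W x) ∂μ =
        (γ (lH * (1 - βH ω) + lk * (1 - βk ω)) - γ (ω + lH * (1 - βH ω))) /
          ((ω - lk * (1 - βk ω)) * EC)) :
    ∫ x, W x ∂μ = (1 + 2 * ρH + ρk) * (EC2 / (2 * EC)) :=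
  stmt_14_general μ W hWnn hWint γ βH βk hγC2 hβHC2 hβkC2 hβH0 hβk0 EC EC2 EBH EBk lH lk hEC hEC2
    hEBH hEBk ρH ρk hρH hρk hW
end
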